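/- Let h ≥ 1 be an integer and t a real number. Then lim_{m→∞} (1/(2m)) Σ_{j=0}^{h−1} (−1)^j e^{h t j/(2m)} C(h−1,j) · (2m+h−j−1)! / (h! (2m−j−1)!) = (1/h) L^{(1)}_{h−1}(ht), where the limit is over natural numbers m → ∞. -/

import Mathlib

/-!
Write `n = 2m`, `k = h - 1` and `q = exp (h t / n)`. Since
`(n + k - j)! / (h! (n - j - 1)!) = C(n + k - j, h)`, the binomial identity
`∑ⱼ (-q)ʲ C(k, j) C(n + k - j, k + 1) = ∑ₐ C(k, a) (1 - q)ᵃ C(n, a + 1)`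
turns the sum into `∑ₐ C(k, a) (n (1 - q))ᵃ · C(n, a + 1) / n ^ (a + 1)`. Termwise,
`n (1 - q) → -h t` and `C(n, a + 1) / n ^ (a + 1) → 1 / (a + 1)!`, and
`h C(k, a) = (a + 1) C(h, a + 1)` identifies the limit with `L^{(1)}_{h-1}(h t) / h`.
-/

open Filter Finset Topology Real

theorem Nat.sum_range_choose_mul_choose_add (n r s : ℕ) :
    ∑ b ∈ range (r + 1), r.choose b * n.choose (s + b) = (n + r).choose (r + s) := by
  induction r generalizing s with
  | zero => simp
  | succ r ih =>
    have hshift : ∑ b ∈ range (r + 1), r.choose (b + 1) * n.choose (s + (b + 1)) + n.choose s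
        = (n + r).choose (r + s) := by
      calc _ = ∑ b ∈ range (r + 2), r.choose b * n.choose (s + b) := by
            rw [sum_range_succ' _ (r + 1)]; simp
        _ = _ := by rw [sum_range_succ, Nat.choose_succ_self, zero_mul, add_zero, ih]
    have hnext := ih (s + 1)
    simp only [add_assoc, add_comm 1] at hnext
    rw [sum_range_succ', Nat.choose_zero_right, one_mul, add_zero]
    simp only [Nat.choose_succ_succ', add_mul, sum_add_distrib]
    rw [add_assoc, hshift, hnext, show n + (r + 1) = n + r + 1 by ring,
      show r + 1 + s = r + s + 1 by ring, Nat.choose_succ_succ' (n + r), add_comm, add_assoc]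

theorem Nat.choose_mul_choose_add_sub_eq_sum (n k j : ℕ) :
    k.choose j * (n + (k - j)).choose (k + 1) =
      ∑ a ∈ range (k + 1), k.choose a * a.choose j * n.choose (a + 1) := by
  rcases lt_or_ge k j with hkj | hjk
  · rw [Nat.choose_eq_zero_of_lt hkj, zero_mul]
    refine (sum_eq_zero fun a ha => ?_).symm
    rw [Nat.choose_eq_zero_of_lt (n := a) (by grind), mul_zero, zero_mul]
  obtain ⟨r, rfl⟩ := Nat.exists_eq_add_of_le hjk
  have hlow : ∀ a ∈ range j, (j + r).choose a * a.choose j * n.choose (a + 1) = 0 := fun a ha => by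
    rw [Nat.choose_eq_zero_of_lt (mem_range.1 ha), mul_zero, zero_mul]
  have hhigh : ∀ b ∈ range (r + 1), (j + r).choose (j + b) * (j + b).choose j * n.choose (j + b + 1)
      = (j + r).choose j * (r.choose b * n.choose (j + 1 + b)) := fun b _ => by
    rw [Nat.choose_mul (Nat.le_add_right j b), Nat.add_sub_cancel_left, Nat.add_sub_cancel_left,
      add_right_comm, mul_assoc]
  rw [add_assoc j r 1, sum_range_add, sum_eq_zero hlow, zero_add, sum_congr rfl hhigh, ← mul_sum,
    Nat.sum_range_choose_mul_choose_add, Nat.add_sub_cancel_left]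
  ring_nf

theorem one_sub_pow_eq_sum_range {R : Type*} [CommRing R] (x : R) {a k : ℕ} (hak : a ≤ k) :
    (1 - x) ^ a = ∑ j ∈ range (k + 1), (-x) ^ j * (a.choose j : R) := by
  rw [sub_eq_neg_add, add_pow]
  refine sum_subset (range_subset_range.2 (by omega)) (fun j _ hj => ?_) |>.trans
    (sum_congr rfl fun j _ => by rw [one_pow, mul_one])
  rw [Nat.choose_eq_zero_of_lt (by grind), Nat.cast_zero, mul_zero]

theorem sum_choose_mul_one_sub_pow_mul_choose {R : Type*} [CommRing R] (n k : ℕ) (x : R) :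
    ∑ a ∈ range (k + 1), (k.choose a : R) * (1 - x) ^ a * (n.choose (a + 1) : R) =
      ∑ j ∈ range (k + 1), (-x) ^ j * (k.choose j : R) * ((n + (k - j)).choose (k + 1) : R) := by
  simp_rw [mul_assoc, ← Nat.cast_mul, Nat.choose_mul_choose_add_sub_eq_sum, Nat.cast_sum,
    mul_sum, Nat.cast_mul]
  rw [sum_comm]
  refine sum_congr rfl fun a ha => ?_
  rw [one_sub_pow_eq_sum_range x (Nat.lt_succ_iff.1 (mem_range.1 ha)), sum_mul, mul_sum]
  exact sum_congr rfl fun j _ => by ring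

theorem tendsto_natCast_mul_one_sub_exp_div (c : ℝ) :
    Tendsto (fun n : ℕ => (n : ℝ) * (1 - exp (c / n))) atTop (𝓝 (-c)) := by
  have hderiv : HasDerivAt (fun x => exp (c * x)) c 0 := by
    simpa using ((hasDerivAt_id (0 : ℝ)).const_mul c).exp
  have hinv : Tendsto (fun n : ℕ => (n : ℝ)⁻¹) atTop (𝓝[>] 0) :=
    tendsto_inv_atTop_nhdsGT_zero.comp tendsto_natCast_atTop_atTop
  refine ((hderiv.tendsto_slope_zero_right.comp hinv).neg).congr fun n => ?_
  simp [div_eq_mul_inv]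
  ring

theorem tendsto_choose_mul_inv_pow (k : ℕ) :
    Tendsto (fun n : ℕ => (n.choose k : ℝ) * ((n : ℝ)⁻¹) ^ k) atTop (𝓝 (1 / k.factorial)) := by
  have hone : Tendsto (fun n : ℕ => (n : ℝ) * (n : ℝ)⁻¹) atTop (𝓝 1) :=
    tendsto_const_nhds.congr' <| (eventually_ne_atTop 0).mono fun n hn => by
      simp [hn]
  simpa using ProbabilityTheory.tendsto_choose_mul_pow_atTop k hone

theorem tendsto_inv_mul_sum_neg_exp_pow_mul_choose (k : ℕ) (c : ℝ) :
    Tendsto (fun n : ℕ => (n : ℝ)⁻¹ * ∑ j ∈ range (k + 1),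
        (-exp (c / n)) ^ j * (k.choose j : ℝ) * ((n + (k - j)).choose (k + 1) : ℝ))
      atTop (𝓝 (∑ a ∈ range (k + 1), (k.choose a : ℝ) * (-c) ^ a / (a + 1).factorial)) := by
  have hterm : ∀ a ∈ range (k + 1), Tendsto (fun n : ℕ => (k.choose a : ℝ) *
      ((n : ℝ) * (1 - exp (c / n))) ^ a * ((n.choose (a + 1) : ℝ) * ((n : ℝ)⁻¹) ^ (a + 1)))
      atTop (𝓝 ((k.choose a : ℝ) * (-c) ^ a / (a + 1).factorial)) := fun a _ => by
    simpa [div_eq_mul_inv, mul_assoc] using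
      (tendsto_natCast_mul_one_sub_exp_div c).pow a |>.const_mul (k.choose a : ℝ) |>.mul
        (tendsto_choose_mul_inv_pow (a + 1))
  refine (tendsto_finsetSum _ hterm).congr' ((eventually_ne_atTop 0).mono fun n hn => ?_)
  dsimp only
  rw [← sum_choose_mul_one_sub_pow_mul_choose, mul_sum]
  refine sum_congr rfl fun a _ => ?_
  have : (n : ℝ) ≠ 0 := Nat.cast_ne_zero.2 hn
  rw [mul_pow, inv_pow]
  field_simp
  ring

theorem sum_choose_mul_pow_div_factorial_succ {K : Type*} [Field K] [CharZero K] (k : ℕ) (y : K) :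
    ∑ a ∈ range (k + 1), (k.choose a : K) * y ^ a / (a + 1).factorial =
      1 / (k + 1 : ℕ) * ∑ l ∈ range (k + 1), ((k + 1).choose (l + 1) : K) * y ^ l / l.factorial := by
  rw [mul_sum]
  refine sum_congr rfl fun a _ => ?_
  have hpascal : ((k + 1 : ℕ) : K) * k.choose a = (k + 1).choose (a + 1) * (a + 1 : ℕ) := by
    exact_mod_cast Nat.add_one_mul_choose_eq k a
  have hfac : (a.factorial : K) ≠ 0 := Nat.cast_ne_zero.2 a.factorial_ne_zero
  rw [Nat.factorial_succ]
  push_cast at hpascal ⊢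
  field_simp
  linear_combination y ^ a * hpascal

theorem cast_factorial_div_eq_choose {K : Type*} [Field K] [CharZero K] {n k j : ℕ}
    (hjk : j ≤ k) (hjn : j < n) :
    ((n + (k + 1) - j - 1).factorial : K) / ((k + 1).factorial * (n - j - 1).factorial) =
      ((n + (k - j)).choose (k + 1) : K) := by
  rw [Nat.cast_choose K (by omega), show n + (k + 1) - j - 1 = n + (k - j) by omega,
    show n + (k - j) - (k + 1) = n - j - 1 by omega]

theorem stmt_3 (h : ℕ) (hh : 1 ≤ h) (t : ℝ) :
    Tendsto (fun m : ℕ =>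
      (1 / (2 * (m : ℝ))) * ∑ j ∈ Finset.range h,
        (-1 : ℝ) ^ j * Real.exp ((h : ℝ) * t * (j : ℝ) / (2 * (m : ℝ))) *
          ((h - 1).choose j : ℝ) *
          ((2 * m + h - j - 1).factorial : ℝ) /
          ((h.factorial : ℝ) * ((2 * m - j - 1).factorial : ℝ)))
      atTop
      (nhds ((1 / (h : ℝ)) *
        ∑ l ∈ Finset.range h, (h.choose (l + 1) : ℝ) * (-((h : ℝ) * t)) ^ l / (l.factorial : ℝ))) := by
  obtain ⟨k, rfl⟩ := Nat.exists_eq_add_of_le' hh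
  have hlim := (tendsto_inv_mul_sum_neg_exp_pow_mul_choose k ((k + 1 : ℕ) * t)).comp
    (tendsto_id.const_mul_atTop' two_pos)
  rw [sum_choose_mul_pow_div_factorial_succ] at hlim
  refine hlim.congr' ((eventually_gt_atTop k).mono fun m hm => ?_)
  simp only [Function.comp_apply, id, Nat.cast_mul, Nat.cast_ofNat, one_div, Nat.add_sub_cancel]
  congr 1
  refine sum_congr rfl fun j hj => ?_
  have hjk : j ≤ k := Nat.lt_succ_iff.1 (mem_range.1 hj)
  have hexp : exp ((k + 1 : ℕ) * t * j / (2 * m)) = exp ((k + 1 : ℕ) * t / (2 * m)) ^ j := by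
    rw [← exp_nat_mul]; ring_nf
  rw [hexp, ← cast_factorial_div_eq_choose (K := ℝ) (n := 2 * m) hjk (by omega), neg_pow]
  ring
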